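/- Let (L,d,λ) be a weak Lie 3-algebra over a commutative ring k with L2 = 0. Then the structure maps λ211, λ31, λ32 and λ4 are identically zero (all of their components vanish for degree reasons), and λ21 is symmetric: λ21^{(12)} = λ21. Consequently the data (L0 ← L1, λ2, λ21, λ3) constitute a weak Lie 2-algebra in the sense of Roytenberg. -/
import Mathlib


namespace WL3

open Finset

/-! ## Graded multilinear maps -/

/-- Cast along an equality of degrees. -/
def gcast {M : ℤ → Type} {i j : ℤ} (h : i = j) (x : M i) : M j := h ▸ x

/-- A degree-`r`, arity-`m` map between ℤ-graded types, given by its components on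
homogeneous tuples: its component at degrees `d` maps `L (d 1) ⊗ ⋯ ⊗ L (d m)` to
`M (r + d 1 + ⋯ + d m)`. -/
abbrev MMap (L M : ℤ → Type) (m : ℕ) (r : ℤ) : Type :=
  ∀ d : Fin m → ℤ, (∀ j, L (d j)) → M (r + ∑ j, d j)

variable {L M N : ℤ → Type}

/-- Cast an `MMap` along equalities of arities and degrees. -/
def mcast {m m' : ℕ} {r r' : ℤ} (hm : m = m') (hr : r = r') (μ : MMap L M m r) :
    MMap L M m' r' := by subst hm; subst hr; exact μ

/-- Koszul sign of the permutation `σ` acting on a tuple of homogeneous elements of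
degrees `d`: `∏_{i<j, σ i > σ j} (-1)^(d i · d j)`. -/
def koszulSign {m : ℕ} (d : Fin m → ℤ) (σ : Equiv.Perm (Fin m)) : ℤ :=
  ∏ p ∈ Finset.univ.filter (fun p : Fin m × Fin m => p.1 < p.2 ∧ σ p.2 < σ p.1),
    (-1 : ℤ) ^ (d p.1 * d p.2).natAbs

/-- The action `μ ↦ μ^σ`, `μ^σ(x₁,…,x_m) = ε(σ;x)·μ(x_{σ⁻¹1},…,x_{σ⁻¹m})`. -/
def pa [∀ i, AddCommGroup (M i)] {m : ℕ} {r : ℤ} (σ : Equiv.Perm (Fin m)) (μ : MMap L M m r) :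
    MMap L M m r := fun d x =>
  koszulSign d σ •
    gcast (by rw [Equiv.sum_comp σ.symm d])
      (μ (fun j => d (σ.symm j)) (fun j => x (σ.symm j)))

/-- Degrees of the outer map in a partial composition. -/
def outDeg (m₁ m₂ n : ℕ) (s : ℤ) (d : Fin (m₁ + n + m₂) → ℤ) : Fin (m₁ + 1 + m₂) → ℤ :=
  Fin.append
    (Fin.append (fun j : Fin m₁ => d (Fin.castAdd m₂ (Fin.castAdd n j)))
      (fun _ : Fin 1 => s + ∑ j : Fin n, d (Fin.castAdd m₂ (Fin.natAdd m₁ j))))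
    (fun j : Fin m₂ => d (Fin.natAdd (m₁ + n) j))

theorem outDeg_left (m₁ m₂ n : ℕ) (s : ℤ) (d : Fin (m₁ + n + m₂) → ℤ) (j : Fin m₁) :
    outDeg m₁ m₂ n s d (Fin.castAdd m₂ (Fin.castAdd 1 j))
      = d (Fin.castAdd m₂ (Fin.castAdd n j)) := by
  simp [outDeg, Fin.append_left]

theorem outDeg_mid (m₁ m₂ n : ℕ) (s : ℤ) (d : Fin (m₁ + n + m₂) → ℤ) (j : Fin 1) :
    outDeg m₁ m₂ n s d (Fin.castAdd m₂ (Fin.natAdd m₁ j))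
      = s + ∑ j : Fin n, d (Fin.castAdd m₂ (Fin.natAdd m₁ j)) := by
  simp [outDeg, Fin.append_left, Fin.append_right]

theorem outDeg_right (m₁ m₂ n : ℕ) (s : ℤ) (d : Fin (m₁ + n + m₂) → ℤ) (j : Fin m₂) :
    outDeg m₁ m₂ n s d (Fin.natAdd (m₁ + 1) j) = d (Fin.natAdd (m₁ + n) j) := by
  simp [outDeg, Fin.append_right]

theorem outDeg_sum (m₁ m₂ n : ℕ) (r s : ℤ) (d : Fin (m₁ + n + m₂) → ℤ) :
    r + ∑ j, outDeg m₁ m₂ n s d j = (r + s) + ∑ j, d j := by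
  simp [outDeg, Fin.sum_univ_add, Fin.append_left, Fin.append_right]
  ring

/-- Partial (operadic) composition `μ ∘_{m₁+1} ν` of `μ` (of arity `m₁ + 1 + m₂`) with `ν`
inserted in the slot `m₁ + 1`, with the Koszul sign `(-1)^(|ν|·(d 1 + ⋯ + d m₁))`. -/
def pcomp [∀ i, AddCommGroup (L i)] [∀ i, AddCommGroup (M i)] (m₁ m₂ : ℕ) {n : ℕ} {r s : ℤ}
    (μ : MMap L M (m₁ + 1 + m₂) r) (ν : MMap L L n s) : MMap L M (m₁ + n + m₂) (r + s) :=
  fun d x =>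
    ((-1 : ℤ) ^ (s * ∑ j : Fin m₁, d (Fin.castAdd m₂ (Fin.castAdd n j))).natAbs) •
    gcast (outDeg_sum m₁ m₂ n r s d)
      (μ (outDeg m₁ m₂ n s d)
        (fun j => Fin.addCases (motive := fun t => L (outDeg m₁ m₂ n s d t))
          (fun j' => Fin.addCases (motive := fun t => L (outDeg m₁ m₂ n s d (Fin.castAdd m₂ t)))
            (fun j1 => gcast (outDeg_left m₁ m₂ n s d j1).symm
              (x (Fin.castAdd m₂ (Fin.castAdd n j1))))
            (fun j0 => gcast (outDeg_mid m₁ m₂ n s d j0).symm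
              (ν (fun j2 => d (Fin.castAdd m₂ (Fin.natAdd m₁ j2)))
                 (fun j2 => x (Fin.castAdd m₂ (Fin.natAdd m₁ j2)))))
            j')
          (fun j3 => gcast (outDeg_right m₁ m₂ n s d j3).symm (x (Fin.natAdd (m₁ + n) j3)))
          j))

/-- Composition `μ ∘ g` of an arity-1 map with an arity-`a` map. -/
def comp₁ {a : ℕ} {r s : ℤ} (μ : MMap M N 1 r) (g : MMap L M a s) : MMap L N a (r + s) :=
  fun d x =>
    gcast (by rw [Fin.sum_univ_one]; ring)
      (μ (fun _ : Fin 1 => s + ∑ j, d j) (fun _ => g d x))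

theorem sum2 (a b : ℕ) (r s₁ s₂ : ℤ) (d : Fin (a + b) → ℤ) :
    r + ∑ t : Fin 2, ![s₁ + ∑ j : Fin a, d (Fin.castAdd b j),
                       s₂ + ∑ j : Fin b, d (Fin.natAdd a j)] t
      = (r + (s₁ + s₂)) + ∑ j, d j := by
  simp [Fin.sum_univ_two, Fin.sum_univ_add]
  ring

/-- Full composition `μ ∘ (g₁, g₂)` with Koszul signs. -/
def comp₂ [∀ i, AddCommGroup (N i)] {a b : ℕ} {r s₁ s₂ : ℤ}
    (μ : MMap M N 2 r) (g₁ : MMap L M a s₁) (g₂ : MMap L M b s₂) :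
    MMap L N (a + b) (r + (s₁ + s₂)) :=
  fun d x =>
    ((-1 : ℤ) ^ (s₂ * ∑ j : Fin a, d (Fin.castAdd b j)).natAbs) •
    gcast (sum2 a b r s₁ s₂ d)
      (μ ![s₁ + ∑ j : Fin a, d (Fin.castAdd b j), s₂ + ∑ j : Fin b, d (Fin.natAdd a j)]
        (Fin.cons (gcast (by simp) (g₁ (fun j => d (Fin.castAdd b j)) (fun j => x (Fin.castAdd b j))))
          (fun _ : Fin 1 => gcast (by simp) (g₂ (fun j => d (Fin.natAdd a j)) (fun j => x (Fin.natAdd a j))))))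

theorem sum3 (a b c : ℕ) (r s₁ s₂ s₃ : ℤ) (d : Fin (a + b + c) → ℤ) :
    r + ∑ t : Fin 3, ![s₁ + ∑ j : Fin a, d (Fin.castAdd c (Fin.castAdd b j)),
                       s₂ + ∑ j : Fin b, d (Fin.castAdd c (Fin.natAdd a j)),
                       s₃ + ∑ j : Fin c, d (Fin.natAdd (a + b) j)] t
      = (r + (s₁ + s₂ + s₃)) + ∑ j, d j := by
  simp [Fin.sum_univ_three, Fin.sum_univ_add]
  ring

/-- Full composition `μ ∘ (g₁, g₂, g₃)` with Koszul signs. -/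
def comp₃ [∀ i, AddCommGroup (N i)] {a b c : ℕ} {r s₁ s₂ s₃ : ℤ}
    (μ : MMap M N 3 r) (g₁ : MMap L M a s₁) (g₂ : MMap L M b s₂) (g₃ : MMap L M c s₃) :
    MMap L N (a + b + c) (r + (s₁ + s₂ + s₃)) :=
  fun d x =>
    ((-1 : ℤ) ^ (s₂ * (∑ j : Fin a, d (Fin.castAdd c (Fin.castAdd b j)))
        + s₃ * ((∑ j : Fin a, d (Fin.castAdd c (Fin.castAdd b j)))
          + ∑ j : Fin b, d (Fin.castAdd c (Fin.natAdd a j)))).natAbs) •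
    gcast (sum3 a b c r s₁ s₂ s₃ d)
      (μ ![s₁ + ∑ j : Fin a, d (Fin.castAdd c (Fin.castAdd b j)),
           s₂ + ∑ j : Fin b, d (Fin.castAdd c (Fin.natAdd a j)),
           s₃ + ∑ j : Fin c, d (Fin.natAdd (a + b) j)]
        (Fin.cons (gcast (by simp)
            (g₁ (fun j => d (Fin.castAdd c (Fin.castAdd b j)))
                (fun j => x (Fin.castAdd c (Fin.castAdd b j)))))
          (Fin.cons (gcast (by simp)
              (g₂ (fun j => d (Fin.castAdd c (Fin.natAdd a j)))
                  (fun j => x (Fin.castAdd c (Fin.natAdd a j)))))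
            (fun _ : Fin 1 => gcast (by simp)
              (g₃ (fun j => d (Fin.natAdd (a + b) j))
                  (fun j => x (Fin.natAdd (a + b) j)))))))

theorem sum4 (a b c e : ℕ) (r s₁ s₂ s₃ s₄ : ℤ) (d : Fin (a + b + c + e) → ℤ) :
    r + ∑ t : Fin 4, ![s₁ + ∑ j : Fin a, d (Fin.castAdd e (Fin.castAdd c (Fin.castAdd b j))),
                       s₂ + ∑ j : Fin b, d (Fin.castAdd e (Fin.castAdd c (Fin.natAdd a j))),
                       s₃ + ∑ j : Fin c, d (Fin.castAdd e (Fin.natAdd (a + b) j)),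
                       s₄ + ∑ j : Fin e, d (Fin.natAdd (a + b + c) j)] t
      = (r + (s₁ + s₂ + s₃ + s₄)) + ∑ j, d j := by
  simp [Fin.sum_univ_four, Fin.sum_univ_add]
  ring

/-- Full composition `μ ∘ (g₁, g₂, g₃, g₄)` with Koszul signs. -/
def comp₄ [∀ i, AddCommGroup (N i)] {a b c e : ℕ} {r s₁ s₂ s₃ s₄ : ℤ}
    (μ : MMap M N 4 r) (g₁ : MMap L M a s₁) (g₂ : MMap L M b s₂) (g₃ : MMap L M c s₃)
    (g₄ : MMap L M e s₄) :
    MMap L N (a + b + c + e) (r + (s₁ + s₂ + s₃ + s₄)) :=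
  fun d x =>
    ((-1 : ℤ) ^ (s₂ * (∑ j : Fin a, d (Fin.castAdd e (Fin.castAdd c (Fin.castAdd b j))))
        + s₃ * ((∑ j : Fin a, d (Fin.castAdd e (Fin.castAdd c (Fin.castAdd b j))))
          + ∑ j : Fin b, d (Fin.castAdd e (Fin.castAdd c (Fin.natAdd a j))))
        + s₄ * ((∑ j : Fin a, d (Fin.castAdd e (Fin.castAdd c (Fin.castAdd b j))))
          + (∑ j : Fin b, d (Fin.castAdd e (Fin.castAdd c (Fin.natAdd a j))))
          + ∑ j : Fin c, d (Fin.castAdd e (Fin.natAdd (a + b) j)))).natAbs) •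
    gcast (sum4 a b c e r s₁ s₂ s₃ s₄ d)
      (μ ![s₁ + ∑ j : Fin a, d (Fin.castAdd e (Fin.castAdd c (Fin.castAdd b j))),
           s₂ + ∑ j : Fin b, d (Fin.castAdd e (Fin.castAdd c (Fin.natAdd a j))),
           s₃ + ∑ j : Fin c, d (Fin.castAdd e (Fin.natAdd (a + b) j)),
           s₄ + ∑ j : Fin e, d (Fin.natAdd (a + b + c) j)]
        (Fin.cons (gcast (by simp)
            (g₁ (fun j => d (Fin.castAdd e (Fin.castAdd c (Fin.castAdd b j))))
                (fun j => x (Fin.castAdd e (Fin.castAdd c (Fin.castAdd b j))))))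
          (Fin.cons (gcast (by simp)
              (g₂ (fun j => d (Fin.castAdd e (Fin.castAdd c (Fin.natAdd a j))))
                  (fun j => x (Fin.castAdd e (Fin.castAdd c (Fin.natAdd a j))))))
            (Fin.cons (gcast (by simp)
                (g₃ (fun j => d (Fin.castAdd e (Fin.natAdd (a + b) j)))
                    (fun j => x (Fin.castAdd e (Fin.natAdd (a + b) j)))))
              (fun _ : Fin 1 => gcast (by simp)
                (g₄ (fun j => d (Fin.natAdd (a + b + c) j))
                    (fun j => x (Fin.natAdd (a + b + c) j))))))))

/-- The differential `∂(μ) = D' ∘ μ - (-1)^{|μ|} ∑ᵢ μ ∘ᵢ D`. -/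
def bdry [∀ i, AddCommGroup (L i)] [∀ i, AddCommGroup (M i)] {m : ℕ} {r : ℤ}
    (D' : MMap M M 1 (-1)) (D : MMap L L 1 (-1)) (μ : MMap L M m r) : MMap L M m (-1 + r) :=
  comp₁ D' μ - ((-1 : ℤ) ^ r.natAbs) •
    ∑ p : Fin m, mcast (by have := p.isLt; omega) (by ring)
      (pcomp p.val (m - 1 - p.val) (mcast (by have := p.isLt; omega) rfl μ) D)

/-- The identity, as an `MMap`. -/
def idm : MMap L L 1 0 := fun d x => gcast (by rw [Fin.sum_univ_one, zero_add]) (x 0)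

/-- `μ ∘_{m₁+1} ν`, recast to a specified target degree `R`. -/
def pc [∀ i, AddCommGroup (L i)] [∀ i, AddCommGroup (M i)] (R : ℤ) (m₁ m₂ : ℕ) {n : ℕ}
    {r s : ℤ} (μ : MMap L M (m₁ + 1 + m₂) r) (ν : MMap L L n s)
    (h : r + s = R := by norm_num) : MMap L M (m₁ + n + m₂) R :=
  mcast rfl h (pcomp m₁ m₂ μ ν)

/-- `μ ∘ g`, recast to a specified target degree `R`. -/
def fc1 (R : ℤ) {a : ℕ} {r s : ℤ} (μ : MMap M N 1 r) (g : MMap L M a s)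
    (h : r + s = R := by norm_num) : MMap L N a R :=
  mcast rfl h (comp₁ μ g)

/-- `μ ∘ (g₁, g₂)`, recast to a specified target degree `R`. -/
def fc2 [∀ i, AddCommGroup (N i)] (R : ℤ) {a b : ℕ} {r s₁ s₂ : ℤ}
    (μ : MMap M N 2 r) (g₁ : MMap L M a s₁) (g₂ : MMap L M b s₂)
    (h : r + (s₁ + s₂) = R := by norm_num) : MMap L N (a + b) R :=
  mcast rfl h (comp₂ μ g₁ g₂)

/-- `μ ∘ (g₁, g₂, g₃)`, recast to a specified target degree `R`. -/
def fc3 [∀ i, AddCommGroup (N i)] (R : ℤ) {a b c : ℕ} {r s₁ s₂ s₃ : ℤ}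
    (μ : MMap M N 3 r) (g₁ : MMap L M a s₁) (g₂ : MMap L M b s₂) (g₃ : MMap L M c s₃)
    (h : r + (s₁ + s₂ + s₃) = R := by norm_num) : MMap L N (a + b + c) R :=
  mcast rfl h (comp₃ μ g₁ g₂ g₃)

/-- `μ ∘ (g₁, g₂, g₃, g₄)`, recast to a specified target degree `R`. -/
def fc4 [∀ i, AddCommGroup (N i)] (R : ℤ) {a b c e : ℕ} {r s₁ s₂ s₃ s₄ : ℤ}
    (μ : MMap M N 4 r) (g₁ : MMap L M a s₁) (g₂ : MMap L M b s₂) (g₃ : MMap L M c s₃)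
    (g₄ : MMap L M e s₄) (h : r + (s₁ + s₂ + s₃ + s₄) = R := by norm_num) :
    MMap L N (a + b + c + e) R :=
  mcast rfl h (comp₄ μ g₁ g₂ g₃ g₄)

/-- `∂(μ)`, recast to a specified target degree `R`. -/
def bd [∀ i, AddCommGroup (L i)] [∀ i, AddCommGroup (M i)] (R : ℤ) {m : ℕ} {r : ℤ}
    (D' : MMap M M 1 (-1)) (D : MMap L L 1 (-1)) (μ : MMap L M m r)
    (h : -1 + r = R := by norm_num) : MMap L M m R :=
  mcast rfl h (bdry D' D μ)

/-- Multilinearity over `k` of the components of an `MMap`. -/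
def IsMultilinear (k : Type) [CommRing k] {L M : ℤ → Type} [∀ i, AddCommGroup (L i)]
    [∀ i, AddCommGroup (M i)] [∀ i, Module k (L i)] [∀ i, Module k (M i)] {m : ℕ} {r : ℤ}
    (μ : MMap L M m r) : Prop :=
  ∀ (d : Fin m → ℤ) (x : ∀ j, L (d j)) (j : Fin m),
    (∀ a b : L (d j), μ d (Function.update x j (a + b))
        = μ d (Function.update x j a) + μ d (Function.update x j b)) ∧
    (∀ (c : k) (a : L (d j)), μ d (Function.update x j (c • a)) = c • μ d (Function.update x j a))

/-! ## Permutations (0-indexed; a cycle `(a b c)` is `swap a b * swap b c`) -/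

def P12 (m : ℕ) [NeZero m] : Equiv.Perm (Fin m) := Equiv.swap 0 1
def P13 (m : ℕ) [NeZero m] : Equiv.Perm (Fin m) := Equiv.swap 0 2
def P23 (m : ℕ) [NeZero m] : Equiv.Perm (Fin m) := Equiv.swap 1 2
def P34 (m : ℕ) [NeZero m] : Equiv.Perm (Fin m) := Equiv.swap 2 3
def P123 (m : ℕ) [NeZero m] : Equiv.Perm (Fin m) := Equiv.swap 0 1 * Equiv.swap 1 2
def P132 (m : ℕ) [NeZero m] : Equiv.Perm (Fin m) := Equiv.swap 0 2 * Equiv.swap 2 1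
def P234 (m : ℕ) [NeZero m] : Equiv.Perm (Fin m) := Equiv.swap 1 2 * Equiv.swap 2 3
def P243 (m : ℕ) [NeZero m] : Equiv.Perm (Fin m) := Equiv.swap 1 3 * Equiv.swap 3 2
def P1234 (m : ℕ) [NeZero m] : Equiv.Perm (Fin m) :=
  Equiv.swap 0 1 * Equiv.swap 1 2 * Equiv.swap 2 3
def P1432 (m : ℕ) [NeZero m] : Equiv.Perm (Fin m) :=
  Equiv.swap 0 3 * Equiv.swap 3 2 * Equiv.swap 2 1
def P1342 (m : ℕ) [NeZero m] : Equiv.Perm (Fin m) :=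
  Equiv.swap 0 2 * Equiv.swap 2 3 * Equiv.swap 3 1
def P13P24 (m : ℕ) [NeZero m] : Equiv.Perm (Fin m) := Equiv.swap 0 2 * Equiv.swap 1 3

end WL3
namespace WL3

open Finset

variable (k : Type) [CommRing k]

/-- A Leibniz 3-algebra structure: maps `l2, l3, l4` on a complex with differential `D`
satisfying the generalized Jacobi identities (L1)–(L4). -/
structure IsLeibniz3 {L : ℤ → Type} [∀ i, AddCommGroup (L i)] [∀ i, Module k (L i)]
    (D : MMap L L 1 (-1)) (l2 : MMap L L 2 0) (l3 : MMap L L 3 1) (l4 : MMap L L 4 2) :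
    Prop where
  lin2 : IsMultilinear k l2
  lin3 : IsMultilinear k l3
  lin4 : IsMultilinear k l4
  eqL1 : bd (-1) D D l2 = 0
  eqL2 : bd 0 D D l3 =
    pc 0 1 0 l2 l2 - pc 0 0 1 l2 l2 - pa (P12 3) (pc 0 1 0 l2 l2)
  eqL3 : bd 1 D D l4 =
    pc 1 0 1 l2 l3 + pc 1 1 0 l2 l3 - pa (P12 4) (pc 1 1 0 l2 l3)
      + pa (P123 4) (pc 1 1 0 l2 l3) - pc 1 0 2 l3 l2
      + pc 1 1 1 l3 l2 - pa (P12 4) (pc 1 1 1 l3 l2)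
      - pc 1 2 0 l3 l2 + pa (P23 4) (pc 1 2 0 l3 l2) - pa (P132 4) (pc 1 2 0 l3 l2)
  eqL4 : (0 : MMap L L 5 2) =
    pc 2 0 1 l2 l4 - pc 2 1 0 l2 l4 + pa (P12 5) (pc 2 1 0 l2 l4)
      - pa (P123 5) (pc 2 1 0 l2 l4) + pa (P1234 5) (pc 2 1 0 l2 l4)
      + pc 2 0 2 l3 l3 + pc 2 1 1 l3 l3 - pa (P12 5) (pc 2 1 1 l3 l3)
      + pa (P123 5) (pc 2 1 1 l3 l3) + pc 2 2 0 l3 l3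
      - pa (P23 5) (pc 2 2 0 l3 l3) + pa (P132 5) (pc 2 2 0 l3 l3)
      + pa (P234 5) (pc 2 2 0 l3 l3) - pa (P1342 5) (pc 2 2 0 l3 l3)
      + pa (P13P24 5) (pc 2 2 0 l3 l3)
      + pc 2 0 3 l4 l2 - pc 2 1 2 l4 l2 + pa (P12 5) (pc 2 1 2 l4 l2)
      + pc 2 2 1 l4 l2 - pa (P23 5) (pc 2 2 1 l4 l2) + pa (P132 5) (pc 2 2 1 l4 l2)
      - pc 2 3 0 l4 l2 + pa (P34 5) (pc 2 3 0 l4 l2) - pa (P243 5) (pc 2 3 0 l4 l2)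
      + pa (P1432 5) (pc 2 3 0 l4 l2)

/-- A weak Lie 3-algebra: a 3-term chain complex equipped with structure maps
`l2, l3, l4, l21, l211, l31, l32` satisfying (L1)–(L4) and (W1)–(W11). -/
structure WeakLie3 (L : ℤ → Type) [∀ i, AddCommGroup (L i)] [∀ i, Module k (L i)] where
  D : MMap L L 1 (-1)
  linD : IsMultilinear k D
  dd : fc1 (-2) D D = 0
  bound : ∀ i : ℤ, (i < 0 ∨ 2 < i) → ∀ x : L i, x = 0
  l2 : MMap L L 2 0
  l3 : MMap L L 3 1
  l4 : MMap L L 4 2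
  l21 : MMap L L 2 1
  l211 : MMap L L 2 2
  l31 : MMap L L 3 2
  l32 : MMap L L 3 2
  leib : IsLeibniz3 k D l2 l3 l4
  lin21 : IsMultilinear k l21
  lin211 : IsMultilinear k l211
  lin31 : IsMultilinear k l31
  lin32 : IsMultilinear k l32
  w1 : bd 0 D D l21 = l2 + pa (P12 2) l2
  w2 : bd 1 D D l211 = l21 - pa (P12 2) l21
  w3 : bd 1 D D l31 = l3 + pa (P12 3) l3 + pc 1 0 1 l2 l21
  w4 : bd 1 D D l32 = l3 + pa (P23 3) l3 - pc 1 1 0 l2 l21 + pc 1 0 1 l21 l2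
        + pa (P12 3) (pc 1 1 0 l21 l2)
  w5 : l211 + pa (P12 2) l211 = 0
  w6 : l31 - pa (P12 3) l31 = pc 2 0 1 l2 l211
  w7 : l31 - pa (P12 3) l32 + pa (P132 3) l31 - l32 + pa (P23 3) l31 - pa (P123 3) l32
        = pc 2 1 0 l21 l21 + pc 2 0 1 l21 l21 + pa (P12 3) (pc 2 1 0 l21 l21)
          + pa (P132 3) (pc 2 1 0 l211 l2)
  w8 : l32 - pa (P23 3) l32 = - pc 2 1 0 l2 l211 + pc 2 0 1 l211 l2
        + pa (P12 3) (pc 2 1 0 l211 l2)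
  w9 : l4 + pa (P12 4) l4 = pc 2 0 1 l2 l31 - pc 2 2 0 l31 l2
        + pa (P123 4) (pc 2 1 0 l2 l31) + pc 2 0 2 l3 l21
  w10 : l4 + pa (P23 4) l4 = pc 2 0 1 l2 l32 - pc 2 1 1 l3 l21 + pc 2 1 0 l2 l31
        - pc 2 0 2 l31 l2 - pa (P12 4) (pc 2 1 1 l31 l2) - pa (P132 4) (pc 2 2 0 l31 l2)
  w11 : l4 + pa (P34 4) l4 = pc 2 0 1 l21 l3 - pc 2 0 2 l32 l2 + pc 2 1 1 l32 l2
        - pa (P12 4) (pc 2 1 1 l32 l2) + pc 2 2 0 l3 l21 + pa (P23 4) (pc 2 2 0 l32 l2)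
        - pa (P132 4) (pc 2 2 0 l32 l2) + pc 2 1 0 l2 l32 - pa (P12 4) (pc 2 1 0 l2 l32)
        + pa (P123 4) (pc 2 1 0 l21 l3)

end WL3
namespace WL3

open Finset

variable (k : Type) [CommRing k]

/-- A weak morphism of weak Lie 3-algebras `(f1,f2,f21,f3) : A → B`, i.e. a solution of
equations (M1)–(M8). -/
structure IsWeakMorphism {L M : ℤ → Type} [∀ i, AddCommGroup (L i)] [∀ i, Module k (L i)]
    [∀ i, AddCommGroup (M i)] [∀ i, Module k (M i)]
    (A : WeakLie3 k L) (B : WeakLie3 k M)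
    (f1 : MMap L M 1 0) (f2 : MMap L M 2 1) (f21 : MMap L M 2 2) (f3 : MMap L M 3 2) :
    Prop where
  lin1 : IsMultilinear k f1
  lin2 : IsMultilinear k f2
  lin21 : IsMultilinear k f21
  lin3 : IsMultilinear k f3
  m1 : bd (-1) B.D A.D f1 = 0
  m2 : bd 0 B.D A.D f2 = fc1 0 f1 A.l2 - fc2 0 B.l2 f1 f1
  m3 : bd 1 B.D A.D f3 = fc1 1 f1 A.l3 - pc 1 1 0 f2 A.l2 + pc 1 0 1 f2 A.l2
        + pa (P12 3) (pc 1 1 0 f2 A.l2) - fc3 1 B.l3 f1 f1 f1 - fc2 1 B.l2 f1 f2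
        + fc2 1 B.l2 f2 f1 + pa (P12 3) (fc2 1 B.l2 f1 f2)
  m4 : fc1 2 f1 A.l4 - fc4 2 B.l4 f1 f1 f1 f1 =
        pc 2 0 1 f2 A.l3 + pc 2 1 0 f2 A.l3 - pa (P12 4) (pc 2 1 0 f2 A.l3)
        + pa (P123 4) (pc 2 1 0 f2 A.l3) - pc 2 0 2 f3 A.l2 + pc 2 1 1 f3 A.l2
        - pa (P12 4) (pc 2 1 1 f3 A.l2) - pc 2 2 0 f3 A.l2 + pa (P23 4) (pc 2 2 0 f3 A.l2)
        - pa (P132 4) (pc 2 2 0 f3 A.l2) + fc2 2 B.l2 f3 f1 + fc2 2 B.l2 f1 f3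
        - pa (P12 4) (fc2 2 B.l2 f1 f3) + pa (P123 4) (fc2 2 B.l2 f1 f3)
        - fc2 2 B.l2 f2 f2 + pa (P23 4) (fc2 2 B.l2 f2 f2) - pa (P132 4) (fc2 2 B.l2 f2 f2)
        + fc3 2 B.l3 f2 f1 f1 - fc3 2 B.l3 f1 f2 f1 + pa (P12 4) (fc3 2 B.l3 f1 f2 f1)
        + fc3 2 B.l3 f1 f1 f2 - pa (P23 4) (fc3 2 B.l3 f1 f1 f2)
        + pa (P132 4) (fc3 2 B.l3 f1 f1 f2)
  m5 : bd 1 B.D A.D f21 = - f2 - pa (P12 2) f2 + fc1 1 f1 A.l21 - fc2 1 B.l21 f1 f1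
  m6 : fc1 2 f1 A.l211 - fc2 2 B.l211 f1 f1 = f21 - pa (P12 2) f21
  m7 : fc1 2 f1 A.l31 - fc3 2 B.l31 f1 f1 f1 =
        f3 + pa (P12 3) f3 + pc 2 0 1 f2 A.l21 + fc2 2 B.l2 f21 f1
  m8 : fc1 2 f1 A.l32 - fc3 2 B.l32 f1 f1 f1 =
        f3 + pa (P23 3) f3 - pc 2 1 0 f2 A.l21 + pc 2 0 1 f21 A.l2
        + pa (P12 3) (pc 2 1 0 f21 A.l2) - fc2 2 B.l2 f1 f21 - fc2 2 B.l21 f2 f1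
        - pa (P12 3) (fc2 2 B.l21 f1 f2)

/-- A morphism of (semi-strict) Lie 3-algebras / Leibniz 3-algebras: equations (M1)–(M4)
for structure maps `(a2,a3,a4)` on the source and `(b2,b3,b4)` on the target. -/
structure IsLeibMorphism {L M : ℤ → Type} [∀ i, AddCommGroup (L i)] [∀ i, Module k (L i)]
    [∀ i, AddCommGroup (M i)] [∀ i, Module k (M i)]
    (DL : MMap L L 1 (-1)) (DM : MMap M M 1 (-1))
    (a2 : MMap L L 2 0) (a3 : MMap L L 3 1) (a4 : MMap L L 4 2)
    (b2 : MMap M M 2 0) (b3 : MMap M M 3 1) (b4 : MMap M M 4 2)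
    (f1 : MMap L M 1 0) (f2 : MMap L M 2 1) (f3 : MMap L M 3 2) : Prop where
  lin1 : IsMultilinear k f1
  lin2 : IsMultilinear k f2
  lin3 : IsMultilinear k f3
  m1 : bd (-1) DM DL f1 = 0
  m2 : bd 0 DM DL f2 = fc1 0 f1 a2 - fc2 0 b2 f1 f1
  m3 : bd 1 DM DL f3 = fc1 1 f1 a3 - pc 1 1 0 f2 a2 + pc 1 0 1 f2 a2
        + pa (P12 3) (pc 1 1 0 f2 a2) - fc3 1 b3 f1 f1 f1 - fc2 1 b2 f1 f2
        + fc2 1 b2 f2 f1 + pa (P12 3) (fc2 1 b2 f1 f2)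
  m4 : fc1 2 f1 a4 - fc4 2 b4 f1 f1 f1 f1 =
        pc 2 0 1 f2 a3 + pc 2 1 0 f2 a3 - pa (P12 4) (pc 2 1 0 f2 a3)
        + pa (P123 4) (pc 2 1 0 f2 a3) - pc 2 0 2 f3 a2 + pc 2 1 1 f3 a2
        - pa (P12 4) (pc 2 1 1 f3 a2) - pc 2 2 0 f3 a2 + pa (P23 4) (pc 2 2 0 f3 a2)
        - pa (P132 4) (pc 2 2 0 f3 a2) + fc2 2 b2 f3 f1 + fc2 2 b2 f1 f3
        - pa (P12 4) (fc2 2 b2 f1 f3) + pa (P123 4) (fc2 2 b2 f1 f3)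
        - fc2 2 b2 f2 f2 + pa (P23 4) (fc2 2 b2 f2 f2) - pa (P132 4) (fc2 2 b2 f2 f2)
        + fc3 2 b3 f2 f1 f1 - fc3 2 b3 f1 f2 f1 + pa (P12 4) (fc3 2 b3 f1 f2 f1)
        + fc3 2 b3 f1 f1 f2 - pa (P23 4) (fc3 2 b3 f1 f1 f2)
        + pa (P132 4) (fc3 2 b3 f1 f1 f2)

/-- A deformation retract `(p, i, h)` of `(L, D)` onto `(L', D')`:
`p`, `i` are chain maps, `id - i∘p = D∘h + h∘D` and `p∘i = id`. -/
structure IsDefRetract {L L' : ℤ → Type} [∀ i, AddCommGroup (L i)] [∀ i, Module k (L i)]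
    [∀ i, AddCommGroup (L' i)] [∀ i, Module k (L' i)]
    (D : MMap L L 1 (-1)) (D' : MMap L' L' 1 (-1))
    (p : MMap L L' 1 0) (i : MMap L' L 1 0) (h : MMap L L 1 1) : Prop where
  linp : IsMultilinear k p
  lini : IsMultilinear k i
  linh : IsMultilinear k h
  chainp : bd (-1) D' D p = 0
  chaini : bd (-1) D D' i = 0
  homotopy : idm - fc1 0 i p = fc1 0 D h + fc1 0 h D
  retract : fc1 0 p i = idm

/-- A weak Lie 2-algebra in the sense of Roytenberg (a 2-term truncation of a weak
Lie 3-algebra). -/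
structure WeakLie2 (L : ℤ → Type) [∀ i, AddCommGroup (L i)] [∀ i, Module k (L i)] where
  D : MMap L L 1 (-1)
  linD : IsMultilinear k D
  dd : fc1 (-2) D D = 0
  bound : ∀ i : ℤ, (i < 0 ∨ 1 < i) → ∀ x : L i, x = 0
  l2 : MMap L L 2 0
  l3 : MMap L L 3 1
  l21 : MMap L L 2 1
  lin2 : IsMultilinear k l2
  lin3 : IsMultilinear k l3
  lin21 : IsMultilinear k l21
  e1 : bd (-1) D D l2 = 0
  e2 : bd 0 D D l3 = pc 0 1 0 l2 l2 - pc 0 0 1 l2 l2 - pa (P12 3) (pc 0 1 0 l2 l2)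
  e3 : (0 : MMap L L 4 1) =
    pc 1 0 1 l2 l3 + pc 1 1 0 l2 l3 - pa (P12 4) (pc 1 1 0 l2 l3)
      + pa (P123 4) (pc 1 1 0 l2 l3) - pc 1 0 2 l3 l2
      + pc 1 1 1 l3 l2 - pa (P12 4) (pc 1 1 1 l3 l2)
      - pc 1 2 0 l3 l2 + pa (P23 4) (pc 1 2 0 l3 l2) - pa (P132 4) (pc 1 2 0 l3 l2)
  e4 : bd 0 D D l21 = l2 + pa (P12 2) l2
  e5 : (0 : MMap L L 2 1) = l21 - pa (P12 2) l21
  e6 : (0 : MMap L L 3 1) = l3 + pa (P12 3) l3 + pc 1 0 1 l2 l21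
  e7 : (0 : MMap L L 3 1) = l3 + pa (P23 3) l3 - pc 1 1 0 l2 l21 + pc 1 0 1 l21 l2
        + pa (P12 3) (pc 1 1 0 l21 l2)

end WL3
namespace WL3

open Finset

section Transfer

variable {k : Type} [CommRing k] {L L' : ℤ → Type}
  [∀ i, AddCommGroup (L i)] [∀ i, Module k (L i)]
  [∀ i, AddCommGroup (L' i)] [∀ i, Module k (L' i)]
variable (A : WeakLie3 k L) (p : MMap L L' 1 0) (i : MMap L' L 1 0) (h : MMap L L 1 1)

/-- `h ∘ λ2` -/
def hl2 : MMap L L 2 1 := fc1 1 h A.l2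
/-- `h ∘ λ3` -/
def hl3 : MMap L L 3 2 := fc1 2 h A.l3
/-- `h ∘ λ21` -/
def hl21 : MMap L L 2 2 := fc1 2 h A.l21

/-- Transferred `λ2' = p ∘ λ2 ∘ (i,i)`. -/
def tl2 : MMap L' L' 2 0 := fc1 0 p (fc2 0 A.l2 i i)

/-- Transferred `λ3'`. -/
def tl3 : MMap L' L' 3 1 :=
  fc1 1 p (fc3 1 A.l3 i i i)
  + fc1 1 p (fc3 1 (pc 1 0 1 A.l2 (hl2 A h)
      - (pc 1 1 0 A.l2 (hl2 A h) - pa (P12 3) (pc 1 1 0 A.l2 (hl2 A h)))) i i i)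

/-- Transferred `λ4'`. -/
def tl4 : MMap L' L' 4 2 :=
  fc1 2 p (fc4 2 A.l4 i i i i)
  - fc1 2 p (fc4 2
      (pc 2 0 1 A.l2 (hl3 A h)
        + (pc 2 1 0 A.l2 (hl3 A h) - pa (P12 4) (pc 2 1 0 A.l2 (hl3 A h))
            + pa (P123 4) (pc 2 1 0 A.l2 (hl3 A h)))
        + pc 2 0 2 A.l3 (hl2 A h)
        - (pc 2 1 1 A.l3 (hl2 A h) - pa (P12 4) (pc 2 1 1 A.l3 (hl2 A h)))
        + (pc 2 2 0 A.l3 (hl2 A h) - pa (P23 4) (pc 2 2 0 A.l3 (hl2 A h))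
            + pa (P132 4) (pc 2 2 0 A.l3 (hl2 A h)))) i i i i)
  - fc1 2 p (fc4 2
      (pc 2 0 2 (pc 1 0 1 A.l2 (hl2 A h)) (hl2 A h)
        - (pc 2 1 1 (pc 1 0 1 A.l2 (hl2 A h)) (hl2 A h)
            - pa (P12 4) (pc 2 1 1 (pc 1 0 1 A.l2 (hl2 A h)) (hl2 A h)))
        + (fc2 2 A.l2 (hl2 A h) (hl2 A h) - pa (P23 4) (fc2 2 A.l2 (hl2 A h) (hl2 A h))
            + pa (P132 4) (fc2 2 A.l2 (hl2 A h) (hl2 A h)))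
        + (pc 2 1 1 (pc 1 1 0 A.l2 (hl2 A h)) (hl2 A h)
            - pa (P12 4) (pc 2 1 1 (pc 1 1 0 A.l2 (hl2 A h)) (hl2 A h))
            + pa (P123 4) (pc 2 1 1 (pc 1 1 0 A.l2 (hl2 A h)) (hl2 A h)))
        - (pc 2 2 0 (pc 1 1 0 A.l2 (hl2 A h)) (hl2 A h)
            - pa (P12 4) (pc 2 2 0 (pc 1 1 0 A.l2 (hl2 A h)) (hl2 A h))
            + pa (P123 4) (pc 2 2 0 (pc 1 1 0 A.l2 (hl2 A h)) (hl2 A h))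
            - pa (P23 4) (pc 2 2 0 (pc 1 1 0 A.l2 (hl2 A h)) (hl2 A h))
            + pa (P132 4) (pc 2 2 0 (pc 1 1 0 A.l2 (hl2 A h)) (hl2 A h))
            - pa (P13 4) (pc 2 2 0 (pc 1 1 0 A.l2 (hl2 A h)) (hl2 A h)))) i i i i)

/-- Transferred `λ21' = p ∘ λ21 ∘ (i,i)`. -/
def tl21 : MMap L' L' 2 1 := fc1 1 p (fc2 1 A.l21 i i)

/-- Transferred `λ211' = p ∘ λ211 ∘ (i,i)`. -/
def tl211 : MMap L' L' 2 2 := fc1 2 p (fc2 2 A.l211 i i)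

/-- Transferred `λ31'`. -/
def tl31 : MMap L' L' 3 2 :=
  fc1 2 p (fc3 2 A.l31 i i i) - fc1 2 p (fc3 2 (pc 2 0 1 A.l2 (hl21 A h)) i i i)

/-- Transferred `λ32'`. -/
def tl32 : MMap L' L' 3 2 :=
  fc1 2 p (fc3 2 A.l32 i i i)
  + fc1 2 p (fc3 2 (pc 2 0 1 A.l21 (hl2 A h) + pc 2 1 0 A.l2 (hl21 A h)
      + pa (P12 3) (pc 2 1 0 A.l21 (hl2 A h))) i i i)

/-- Extension of `i`: `i₂ = -h ∘ λ2 ∘ (i,i)`. -/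
def ti2 : MMap L' L 2 1 := - fc1 1 h (fc2 0 A.l2 i i)

/-- Extension of `i`: `i₂₁ = -h ∘ λ21 ∘ (i,i)`. -/
def ti21 : MMap L' L 2 2 := - fc1 2 h (fc2 1 A.l21 i i)

/-- Extension of `i`: `i₃`. -/
def ti3 : MMap L' L 3 2 :=
  - fc1 2 h (fc3 1 A.l3 i i i)
  - fc1 2 h (fc3 1 (pc 1 0 1 A.l2 (hl2 A h)
      - (pc 1 1 0 A.l2 (hl2 A h) - pa (P12 3) (pc 1 1 0 A.l2 (hl2 A h)))) i i i)

end Transfer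

section Skew

variable (k : Type) [CommRing k] [Invertible (2 : k)] [Invertible (3 : k)]
variable {L M : ℤ → Type} [∀ i, AddCommGroup (L i)] [∀ i, Module k (L i)]
  [∀ i, AddCommGroup (M i)] [∀ i, Module k (M i)]

/-- Skew-symmetrization `λ̄2` of a weak Lie 3-algebra. -/
def skew2 (A : WeakLie3 k L) : MMap L L 2 0 :=
  (⅟ (2 : k)) • ∑ σ : Equiv.Perm (Fin 2), (Equiv.Perm.sign σ : ℤ) • pa σ A.l2

/-- Skew-symmetrization `λ̄3` of a weak Lie 3-algebra. -/
def skew3 (A : WeakLie3 k L) : MMap L L 3 1 :=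
  (⅟ (2 : k) * ⅟ (3 : k)) • ∑ σ : Equiv.Perm (Fin 3), (Equiv.Perm.sign σ : ℤ) • pa σ A.l3
  - (⅟ (2 : k) * ⅟ (2 : k) * ⅟ (2 : k) * ⅟ (3 : k)) •
      ∑ σ : Equiv.Perm (Fin 3), (Equiv.Perm.sign σ : ℤ) •
        pa σ (pc 1 0 1 A.l21 A.l2 + pc 1 1 0 A.l21 A.l2)

/-- Skew-symmetrization `λ̄4` of a weak Lie 3-algebra. -/
def skew4 (A : WeakLie3 k L) : MMap L L 4 2 :=
  (⅟ (2 : k) * ⅟ (2 : k) * ⅟ (2 : k) * ⅟ (3 : k)) •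
      ∑ σ : Equiv.Perm (Fin 4), (Equiv.Perm.sign σ : ℤ) • pa σ A.l4
  + (⅟ (2 : k) * ⅟ (2 : k) * ⅟ (2 : k) * ⅟ (2 : k) * ⅟ (3 : k)) •
      ∑ σ : Equiv.Perm (Fin 4), (Equiv.Perm.sign σ : ℤ) •
        pa σ (pc 2 0 1 A.l21 A.l3 - pc 2 0 2 A.l31 A.l2 + pc 2 1 1 A.l32 A.l2
          - pc 2 1 0 A.l21 A.l3 - pc 2 1 1 A.l31 A.l2 + pc 2 2 0 A.l32 A.l2)

/-- Skew-symmetrization `f̄2` of the second component of a weak morphism. -/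
def skewMor2 (f2 : MMap L M 2 1) : MMap L M 2 1 :=
  (⅟ (2 : k)) • ∑ σ : Equiv.Perm (Fin 2), (Equiv.Perm.sign σ : ℤ) • pa σ f2

/-- Skew-symmetrization `f̄3` of the third component of a weak morphism `A → B`. -/
def skewMor3 (A : WeakLie3 k L) (B : WeakLie3 k M) (f1 : MMap L M 1 0) (f2 : MMap L M 2 1)
    (f21 : MMap L M 2 2) (f3 : MMap L M 3 2) : MMap L M 3 2 :=
  (⅟ (2 : k) * ⅟ (3 : k)) • ∑ σ : Equiv.Perm (Fin 3), (Equiv.Perm.sign σ : ℤ) • pa σ f3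
  - (⅟ (2 : k) * ⅟ (2 : k) * ⅟ (2 : k) * ⅟ (3 : k)) •
      ∑ σ : Equiv.Perm (Fin 3), (Equiv.Perm.sign σ : ℤ) •
        pa σ (pc 2 0 1 f21 A.l2 + pc 2 1 0 f21 A.l2
          - fc2 2 B.l21 f2 f1 - fc2 2 B.l21 f1 f2)

end Skew

section Comp

variable {k : Type} [CommRing k] {L M N : ℤ → Type}
  [∀ i, AddCommGroup (L i)] [∀ i, Module k (L i)]
  [∀ i, AddCommGroup (M i)] [∀ i, Module k (M i)]
  [∀ i, AddCommGroup (N i)] [∀ i, Module k (N i)]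

/-- First component of the composition of weak morphisms. -/
def cmp1 (f1' : MMap M N 1 0) (f1 : MMap L M 1 0) : MMap L N 1 0 := fc1 0 f1' f1

/-- Second component of the composition of weak morphisms. -/
def cmp2 (f1' : MMap M N 1 0) (f2' : MMap M N 2 1) (f1 : MMap L M 1 0) (f2 : MMap L M 2 1) :
    MMap L N 2 1 := fc2 1 f2' f1 f1 + fc1 1 f1' f2

/-- `(f'∘f)21` component of the composition of weak morphisms. -/
def cmp21 (f1' : MMap M N 1 0) (f21' : MMap M N 2 2) (f1 : MMap L M 1 0)
    (f21 : MMap L M 2 2) : MMap L N 2 2 := fc2 2 f21' f1 f1 + fc1 2 f1' f21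

/-- Third component of the composition of weak morphisms. -/
def cmp3 (f1' : MMap M N 1 0) (f2' : MMap M N 2 1) (f3' : MMap M N 3 2)
    (f1 : MMap L M 1 0) (f2 : MMap L M 2 1) (f3 : MMap L M 3 2) : MMap L N 3 2 :=
  fc3 2 f3' f1 f1 f1 - fc2 2 f2' f2 f1 + fc2 2 f2' f1 f2 - pa (P12 3) (fc2 2 f2' f1 f2)
    + fc1 2 f1' f3

end Comp

end WL3
namespace WL3

section Aux

variable {k : Type} [CommRing k] {L M : ℤ → Type}
  [∀ i, AddCommGroup (L i)] [∀ i, Module k (L i)]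
  [∀ i, AddCommGroup (M i)] [∀ i, Module k (M i)]

theorem gcast_zero {i j : ℤ} (h : i = j) : gcast (M := M) h 0 = 0 := by subst h; rfl

theorem mcast_zero {m m' : ℕ} {r r' : ℤ} (hm : m = m') (hr : r = r') :
    mcast hm hr (0 : MMap L M m r) = 0 := by subst hm; subst hr; rfl

theorem mmap_zero_input {m : ℕ} {r : ℤ} (μ : MMap L M m r) (hμ : IsMultilinear k μ)
    (d : Fin m → ℤ) (x : ∀ j, L (d j)) (j : Fin m) (hj : x j = 0) : μ d x = 0 := by
  have h := (hμ d x j).2 (0 : k) 0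
  simp only [smul_zero, zero_smul] at h
  calc μ d x = μ d (Function.update x j (x j)) := by rw [Function.update_eq_self]
    _ = μ d (Function.update x j 0) := by rw [hj]
    _ = 0 := h

theorem mmap_high_vanish {m : ℕ} {r : ℤ} (hr : 2 ≤ r)
    (bound : ∀ i : ℤ, (i < 0 ∨ 2 < i) → ∀ x : L i, x = 0)
    (h2 : ∀ x : L 2, x = 0)
    (μ : MMap L L m r) (hμ : IsMultilinear k μ) : μ = 0 := by
  have top : ∀ j : ℤ, 2 ≤ j → ∀ x : L j, x = 0 := by
    intro j hj x
    by_cases h : j = 2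
    · subst h; exact h2 x
    · exact bound j (Or.inr (by omega)) x
  funext d x
  show μ d x = 0
  by_cases hd : ∀ j, 0 ≤ d j ∧ d j ≤ 1
  · have hsum : 0 ≤ ∑ j, d j := Finset.sum_nonneg (fun j _ => (hd j).1)
    exact top _ (by omega) _
  · push_neg at hd
    obtain ⟨j, hj⟩ := hd
    have hx : x j = 0 := by
      rcases lt_or_ge (d j) 0 with h | h
      · exact bound _ (Or.inl h) _
      · exact top _ (by have := hj h; omega) _
    exact mmap_zero_input μ hμ d x j hx

theorem comp₁_zero {m : ℕ} {r : ℤ} (D' : MMap M M 1 (-1)) (hD' : IsMultilinear k D') :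
    comp₁ D' (0 : MMap L M m r) = 0 := by
  funext d x
  show gcast _ (D' _ (fun _ => (0 : MMap L M m r) d x)) = 0
  have h0 : D' (fun _ : Fin 1 => r + ∑ j, d j) (fun _ => 0) = 0 :=
    mmap_zero_input D' hD' _ _ 0 rfl
  simp only [Pi.zero_apply, h0, gcast_zero]

theorem pcomp_zero (m₁ m₂ : ℕ) {n : ℕ} {r s : ℤ} (ν : MMap L L n s) :
    pcomp m₁ m₂ (0 : MMap L M (m₁ + 1 + m₂) r) ν = 0 := by
  funext d x
  show _ • gcast _ ((0 : MMap L M _ r) _ _) = 0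
  simp only [Pi.zero_apply, gcast_zero, smul_zero]

theorem bd_zero {m : ℕ} {r R : ℤ} (D' : MMap M M 1 (-1)) (D : MMap L L 1 (-1))
    (hD' : IsMultilinear k D') (h : -1 + r = R) :
    bd R D' D (0 : MMap L M m r) h = 0 := by
  subst h
  show bdry D' D 0 = 0
  unfold bdry
  rw [comp₁_zero D' hD']
  simp only [mcast_zero, pcomp_zero, Finset.sum_const_zero, smul_zero, sub_zero]

end Aux

/-- **Truncation to weak Lie 2-algebras**: if `(L,d,λ)` is a weak Lie 3-algebra with
`L₂ = 0`, then `λ211, λ31, λ32, λ4` vanish, `λ21` is symmetric, and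
`(L0 ← L1, λ2, λ21, λ3)` is a weak Lie 2-algebra in the sense of Roytenberg. -/
theorem weak_Lie3_with_trivial_top_is_weak_Lie2
    (k : Type) [CommRing k] {L : ℤ → Type}
    [∀ i, AddCommGroup (L i)] [∀ i, Module k (L i)]
    (A : WeakLie3 k L) (h2 : ∀ x : L 2, x = 0) :
    A.l211 = 0 ∧ A.l31 = 0 ∧ A.l32 = 0 ∧ A.l4 = 0 ∧
    pa (P12 2) A.l21 = A.l21 ∧
    ∃ B : WeakLie2 k L, B.D = A.D ∧ B.l2 = A.l2 ∧ B.l21 = A.l21 ∧ B.l3 = A.l3 := by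
  have h211 : A.l211 = 0 :=
    mmap_high_vanish le_rfl A.bound h2 A.l211 A.lin211
  have h31 : A.l31 = 0 :=
    mmap_high_vanish le_rfl A.bound h2 A.l31 A.lin31
  have h32 : A.l32 = 0 :=
    mmap_high_vanish le_rfl A.bound h2 A.l32 A.lin32
  have h4 : A.l4 = 0 :=
    mmap_high_vanish le_rfl A.bound h2 A.l4 A.leib.lin4
  have hw2 := A.w2
  rw [h211, bd_zero A.D A.D A.linD] at hw2
  have hsym : pa (P12 2) A.l21 = A.l21 :=
    (sub_eq_zero.mp hw2.symm).symm
  refine ⟨h211, h31, h32, h4, hsym, ?_⟩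
  have e3' := A.leib.eqL3
  rw [h4, bd_zero A.D A.D A.linD] at e3'
  have e6' := A.w3
  rw [h31, bd_zero A.D A.D A.linD] at e6'
  have e7' := A.w4
  rw [h32, bd_zero A.D A.D A.linD] at e7'
  refine ⟨{ D := A.D, linD := A.linD, dd := A.dd,
            bound := ?_, l2 := A.l2, l3 := A.l3, l21 := A.l21,
            lin2 := A.leib.lin2, lin3 := A.leib.lin3, lin21 := A.lin21,
            e1 := A.leib.eqL1, e2 := A.leib.eqL2, e3 := e3', e4 := A.w1,
            e5 := hw2, e6 := e6', e7 := e7' }, rfl, rfl, rfl, rfl⟩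
  intro i hi x
  rcases hi with hi | hi
  · exact A.bound i (Or.inl hi) x
  · by_cases h : i = 2
    · subst h; exact h2 x
    · exact A.bound i (Or.inr (by omega)) x

end WL3
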